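/- arXiv:2012.07097 — 9 statements merged into one kernel-verified Lean document; each statement's English description precedes it below -/
import Mathlib

section
/- For any algebraic integer λ in the ring of integers of K = Q(ζ₇ + ζ₇⁻¹), the field norm N_{K/Q}(λ) is congruent to 0, 1, or -1 modulo 7. -/
/-!
`β = 2 cos (2π/7) = ζ₇ + ζ₇⁻¹` is a root of the irreducible cubic `X³ + X² - 2X - 1`, whose
roots `β, β² - 2, 1 - β - β²` all lie in `ℚ(β)`, so `K = ℚ(β)` is a cyclic cubic field.
The algebraic integer `π = β - 2` has minimal polynomial `X³ + 7X² + 14X + 7` and norm `-7`, so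
`𝓞 K ⧸ (π) ≅ 𝔽₇`, and since `π³ ∈ 7 𝓞 K` every ring homomorphism `𝓞 K → 𝔽₇` kills `π`:
there is exactly one, `φ`. In particular `φ ∘ σ = φ` for every `σ ∈ Gal(K/ℚ)`, so applying `φ`
to `N(λ) = ∏ σ λ` gives `N(λ) ≡ φ(λ)³ (mod 7)`, and the cubes of `𝔽₇` are `0` and `±1`.
-/

open Polynomial IntermediateField NumberField

theorem Algebra.norm_eq_coeff_zero_minpoly_of_natDegree_eq {K L : Type*} [Field K] [Field L]
    [Algebra K L] [FiniteDimensional K L] {x : L}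
    (hx : (minpoly K x).natDegree = Module.finrank K L) :
    Algebra.norm K x = (-1) ^ Module.finrank K L * (minpoly K x).coeff 0 := by
  have hint : IsIntegral K x := Algebra.IsIntegral.isIntegral x
  have htop : Module.finrank K⟮x⟯ L = 1 := by
    have h := Module.finrank_mul_finrank K K⟮x⟯ L
    rw [adjoin.finrank hint, hx] at h
    exact (Nat.mul_eq_left Module.finrank_pos.ne').mp h
  rw [Algebra.norm_eq_norm_adjoin, htop, pow_one, ← IntermediateField.adjoin.powerBasis_gen hint,
    PowerBasis.norm_gen_eq_coeff_zero_minpoly, IntermediateField.adjoin.powerBasis_dim,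
    IntermediateField.adjoin.powerBasis_gen, minpoly_gen, hx]

theorem Algebra.norm_sub_algebraMap_of_natDegree_eq {K L : Type*} [Field K] [Field L]
    [Algebra K L] [FiniteDimensional K L] {x : L}
    (hx : (minpoly K x).natDegree = Module.finrank K L) (a : K) :
    Algebra.norm K (x - algebraMap K L a) = (-1) ^ Module.finrank K L * (minpoly K x).eval a := by
  have hmin := minpoly.sub_algebraMap (A := K) x a
  rw [norm_eq_coeff_zero_minpoly_of_natDegree_eq, hmin, coeff_zero_eq_eval_zero, eval_comp]
  · simp
  · rw [hmin, natDegree_comp, natDegree_X_add_C, mul_one, hx]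

theorem IsGalois.of_natDegree_minpoly_eq_finrank_of_splits {F E : Type*} [Field F] [CharZero F]
    [Field E] [Algebra F E] [FiniteDimensional F E] {α : E}
    (hα : (minpoly F α).natDegree = Module.finrank F E)
    (h_splits : ((minpoly F α).map (algebraMap F E)).Splits) : IsGalois F E := by
  have hint : IsIntegral F α := Algebra.IsIntegral.isIntegral α
  have htop : F⟮α⟯ = ⊤ := (Field.primitive_element_iff_minpoly_natDegree_eq F α).mpr hα
  have : IsSplittingField F E (minpoly F α) := by
    refine isSplittingField_iff_intermediateField.mpr ⟨h_splits, eq_top_iff.mpr ?_⟩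
    rw [← htop, adjoin_simple_le_iff]
    exact subset_adjoin F _ (mem_rootSet.mpr ⟨minpoly.ne_zero hint, minpoly.aeval F α⟩)
  exact IsGalois.of_separable_splitting_field (minpoly.irreducible hint).separable

/- `ℚ⟮α⟯` carries two `ℚ`-module structures, the one of an intermediate field and the one of a
field of characteristic zero; `NumberField` refers to the second. -/
theorem IntermediateField.numberField_adjoin {E : Type*} [Field E] [Algebra ℚ E] {α : E}
    (hα : IsIntegral ℚ α) : NumberField ℚ⟮α⟯ where
  to_finiteDimensional := by
    have := adjoin.finiteDimensional hα
    rwa [Subsingleton.elim (Algebra.toModule : Module ℚ ℚ⟮α⟯) ℚ⟮α⟯.module']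

theorem NumberField.RingOfIntegers.algebraMap_norm_eq_prod_galRestrict {L : Type*} [Field L]
    [NumberField L] [IsGalois ℚ L] (x : 𝓞 L) :
    algebraMap ℤ (𝓞 L) (Algebra.norm ℤ x) = ∏ σ : Gal(L/ℚ), galRestrict ℤ ℚ L (𝓞 L) σ x := by
  ext
  simp only [map_prod, algebraMap_galRestrict_apply, ← Algebra.norm_eq_prod_automorphisms]
  rw [← Algebra.coe_norm_int]
  simp

theorem NumberField.RingOfIntegers.intCast_norm_eq_pow_finrank {L R : Type*} [Field L]
    [NumberField L] [IsGalois ℚ L] [CommRing R] {φ : 𝓞 L →+* R}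
    (hφ : ∀ ψ : 𝓞 L →+* R, ψ = φ) (x : 𝓞 L) :
    (Algebra.norm ℤ x : R) = φ x ^ Module.finrank ℚ L := by
  have hinv (σ : Gal(L/ℚ)) : φ (galRestrict ℤ ℚ L (𝓞 L) σ x) = φ x :=
    congrArg (· x) (hφ (φ.comp (galRestrict ℤ ℚ L (𝓞 L) σ).toRingHom))
  calc (Algebra.norm ℤ x : R) = φ (algebraMap ℤ (𝓞 L) (Algebra.norm ℤ x)) :=
        (map_intCast φ _).symm
    _ = ∏ _σ : Gal(L/ℚ), φ x := by
      rw [algebraMap_norm_eq_prod_galRestrict, map_prod]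
      exact Finset.prod_congr rfl fun σ _ ↦ hinv σ
    _ = φ x ^ Module.finrank ℚ L := by
      rw [Finset.prod_const, Finset.card_univ, ← Nat.card_eq_fintype_card,
        IsGalois.card_aut_eq_finrank]

theorem Ideal.existsUnique_ringHom_zmod_of_card_quotient {A : Type*} [CommRing A] {I : Ideal A}
    {p : ℕ} (hp : p.Prime) (hI : Nat.card (A ⧸ I) = p) :
    ∃! φ : A →+* ZMod p, I ≤ RingHom.ker φ := by
  have : Fintype (A ⧸ I) := @Fintype.ofFinite _ (Nat.finite_of_card_ne_zero (hI ▸ hp.ne_zero))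
  let e := ZMod.ringEquivOfPrime (A ⧸ I) hp (by rwa [Fintype.card_eq_nat_card])
  refine ⟨e.symm.toRingHom.comp (Ideal.Quotient.mk I), fun a ha ↦ ?_, fun ψ hψ ↦ ?_⟩
  · simp [RingHom.mem_ker, Ideal.Quotient.eq_zero_iff_mem.mpr ha]
  · have hlift : Ideal.Quotient.lift I ψ hψ = e.symm.toRingHom := by
      have := Subsingleton.elim ((Ideal.Quotient.lift I ψ hψ).comp e.toRingHom)
        (e.symm.toRingHom.comp e.toRingHom)
      ext x
      simpa using congr($this (e.symm x))
    rw [← Ideal.Quotient.lift_comp_mk I ψ hψ, hlift]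

theorem NumberField.RingOfIntegers.existsUnique_ringHom_zmod_of_natAbs_norm {L : Type*}
    [Field L] [NumberField L] {p : ℕ} (hp : p.Prime) {π : 𝓞 L}
    (hπ : (Algebra.norm ℤ π).natAbs = p) : ∃! φ : 𝓞 L →+* ZMod p, φ π = 0 := by
  have hcard : Nat.card (𝓞 L ⧸ Ideal.span {π}) = p := by
    rw [← Submodule.cardQuot_apply, ← Ideal.absNorm_apply, Ideal.absNorm_span_singleton, hπ]
  simpa [Ideal.span_le, RingHom.mem_ker] using
    Ideal.existsUnique_ringHom_zmod_of_card_quotient hp hcard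

theorem cubic_rat_ne_zero (r : ℚ) : r ^ 3 + r ^ 2 - 2 * r - 1 ≠ 0 := by
  intro hr
  have hint : IsIntegral ℤ r :=
    ⟨X ^ 3 + X ^ 2 - 2 * X - 1, by monicity!, by simpa [map_ofNat] using hr⟩
  obtain ⟨m, rfl⟩ := IsIntegrallyClosed.isIntegral_iff.mp hint
  have hm : m ^ 3 + m ^ 2 - 2 * m - 1 = 0 := by
    rw [algebraMap_int_eq, eq_intCast] at hr
    exact_mod_cast hr
  have hunit : IsUnit m := isUnit_of_dvd_one ⟨m ^ 2 + m - 2, by linear_combination -hm⟩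
  rcases Int.isUnit_iff.mp hunit with rfl | rfl <;> norm_num at hm

theorem irreducible_cubic : Irreducible (X ^ 3 + X ^ 2 - 2 * X - 1 : ℚ[X]) := by
  refine irreducible_of_degree_le_three_of_not_isRoot ?_ fun r hr ↦ cubic_rat_ne_zero r ?_
  · rw [show (X ^ 3 + X ^ 2 - 2 * X - 1 : ℚ[X]).natDegree = 3 by compute_degree!]
    decide
  · simpa using hr

theorem isIntegral_of_cubic {R A : Type*} [CommRing R] [Ring A] [Algebra R A] {θ : A}
    (hθ : θ ^ 3 + θ ^ 2 - 2 * θ - 1 = 0) : IsIntegral R θ :=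
  ⟨X ^ 3 + X ^ 2 - 2 * X - 1, by monicity!, by simpa [map_ofNat] using hθ⟩

theorem minpoly_eq_cubic {L : Type*} [Field L] [Algebra ℚ L] {θ : L}
    (hθ : θ ^ 3 + θ ^ 2 - 2 * θ - 1 = 0) : minpoly ℚ θ = X ^ 3 + X ^ 2 - 2 * X - 1 :=
  (minpoly.eq_of_irreducible_of_monic irreducible_cubic (by simpa [map_ofNat] using hθ)
    (by monicity!)).symm

theorem splits_cubic {L : Type*} [Field L] {θ : L} (hθ : θ ^ 3 + θ ^ 2 - 2 * θ - 1 = 0) :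
    (X ^ 3 + X ^ 2 - 2 * X - 1 : L[X]).Splits := by
  have hCθ : C θ ^ 3 + C θ ^ 2 - 2 * C θ - 1 = (0 : L[X]) := by
    simpa [map_ofNat] using congrArg C hθ
  have hfactor : (X ^ 3 + X ^ 2 - 2 * X - 1 : L[X])
      = (X - C θ) * (X - C (θ ^ 2 - 2)) * (X - C (1 - θ - θ ^ 2)) := by
    simp only [C_sub, C_pow, C_1, map_ofNat]
    linear_combination (C θ * X - C θ ^ 2 + 1) * hCθ
  rw [hfactor]
  exact ((Splits.X_sub_C _).mul (Splits.X_sub_C _)).mul (Splits.X_sub_C _)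

theorem isGalois_of_cubic {L : Type*} [Field L] [Algebra ℚ L] [FiniteDimensional ℚ L] {θ : L}
    (hθ : θ ^ 3 + θ ^ 2 - 2 * θ - 1 = 0) (hL : Module.finrank ℚ L = 3) : IsGalois ℚ L := by
  refine IsGalois.of_natDegree_minpoly_eq_finrank_of_splits (α := θ) ?_ ?_
  · rw [minpoly_eq_cubic hθ, hL]
    compute_degree!
  · rw [minpoly_eq_cubic hθ]
    simpa using splits_cubic hθ

section CubicField

variable {L : Type*} [Field L] [NumberField L] {θ : L}

theorem exists_norm_eq_neg_seven (hθ : θ ^ 3 + θ ^ 2 - 2 * θ - 1 = 0)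
    (hL : Module.finrank ℚ L = 3) :
    ∃ π : 𝓞 L, Algebra.norm ℤ π = -7 ∧ π ^ 3 + 7 * π ^ 2 + 14 * π + 7 = 0 := by
  let θ' : 𝓞 L := ⟨θ, isIntegral_of_cubic hθ⟩
  have hθ' : θ' ^ 3 + θ' ^ 2 - 2 * θ' - 1 = 0 := RingOfIntegers.ext hθ
  refine ⟨θ' - 2, ?_, by linear_combination hθ'⟩
  have hdeg : (minpoly ℚ θ).natDegree = Module.finrank ℚ L := by
    rw [minpoly_eq_cubic hθ, hL]
    compute_degree!
  have hnorm := Algebra.norm_sub_algebraMap_of_natDegree_eq hdeg (2 : ℚ)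
  rw [minpoly_eq_cubic hθ, hL] at hnorm
  norm_num at hnorm
  apply Int.cast_injective (α := ℚ)
  rw [Algebra.coe_norm_int]
  push_cast
  exact hnorm

theorem exists_intCast_norm_eq_cube (hθ : θ ^ 3 + θ ^ 2 - 2 * θ - 1 = 0)
    (hL : Module.finrank ℚ L = 3) (x : 𝓞 L) :
    ∃ c : ZMod 7, (Algebra.norm ℤ x : ZMod 7) = c ^ 3 := by
  have := isGalois_of_cubic hθ hL
  have : Fact (Nat.Prime 7) := ⟨by norm_num⟩
  obtain ⟨π, hnorm, hπ⟩ := exists_norm_eq_neg_seven hθ hL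
  obtain ⟨φ, -, hφ⟩ := RingOfIntegers.existsUnique_ringHom_zmod_of_natAbs_norm (p := 7)
    (by norm_num) (by rw [hnorm]; rfl)
  have h7 : (7 : ZMod 7) = 0 := rfl
  have hkill (ψ : 𝓞 L →+* ZMod 7) : ψ π = 0 := by
    have h := congrArg ψ hπ
    simp only [map_add, map_mul, map_pow, map_ofNat, map_zero] at h
    exact pow_eq_zero_iff (n := 3) (by norm_num) |>.mp
      (by linear_combination h - (ψ π ^ 2 + 2 * ψ π + 1) * h7)
  refine ⟨φ x, ?_⟩
  rw [RingOfIntegers.intCast_norm_eq_pow_finrank (fun ψ ↦ hφ ψ (hkill ψ)), hL]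

end CubicField

theorem exists_intCast_norm_eq_cube_of_adjoin {E : Type*} [Field E] [Algebra ℚ E] {α : E}
    (hα : α ^ 3 + α ^ 2 - 2 * α - 1 = 0) (x : 𝓞 ℚ⟮α⟯) :
    ∃ c : ZMod 7, (Algebra.norm ℤ x : ZMod 7) = c ^ 3 := by
  have hint : IsIntegral ℚ α := isIntegral_of_cubic hα
  have := numberField_adjoin hint
  refine exists_intCast_norm_eq_cube (θ := AdjoinSimple.gen ℚ α) (Subtype.ext hα) ?_ x
  rw [Subsingleton.elim (Algebra.toModule : Module ℚ ℚ⟮α⟯) ℚ⟮α⟯.module', adjoin.finrank hint,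
    minpoly_eq_cubic hα]
  compute_degree!

theorem IsPrimitiveRoot.add_inv_cubic_eq_zero {F : Type*} [Field F] {ζ : F}
    (hζ : IsPrimitiveRoot ζ 7) :
    (ζ + ζ⁻¹) ^ 3 + (ζ + ζ⁻¹) ^ 2 - 2 * (ζ + ζ⁻¹) - 1 = 0 := by
  have h7 : ζ ^ 7 = 1 := hζ.pow_eq_one
  have hinv : ζ⁻¹ = ζ ^ 6 := inv_eq_of_mul_eq_one_right (by rw [← pow_succ', h7])
  have hsum : ∑ i ∈ Finset.range 7, ζ ^ i = 0 := hζ.geom_sum_eq_zero (by norm_num)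
  simp only [Finset.sum_range_succ, Finset.sum_range_zero] at hsum
  rw [hinv]
  linear_combination hsum + (3 * ζ + 3 * ζ ^ 6 + ζ ^ 11 + ζ ^ 4 + ζ ^ 5 + 2) * h7

open Real in
theorem two_cos_two_pi_div_seven_cubic_eq_zero :
    (2 * cos (2 * π / 7)) ^ 3 + (2 * cos (2 * π / 7)) ^ 2 - 2 * (2 * cos (2 * π / 7)) - 1 = 0 := by
  have hζ := Complex.isPrimitiveRoot_exp 7 (by norm_num)
  have h : ((2 * cos (2 * π / 7) : ℝ) : ℂ) = Complex.exp (2 * π * Complex.I / 7)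
      + (Complex.exp (2 * π * Complex.I / 7))⁻¹ := by
    rw [← Complex.exp_neg]
    push_cast
    rw [Complex.two_cos]
    ring_nf
  exact_mod_cast h ▸ hζ.add_inv_cubic_eq_zero

theorem cube_zmod_seven : ∀ c : ZMod 7, c ^ 3 = 0 ∨ c ^ 3 = 1 ∨ c ^ 3 = -1 := by decide

open Real in
/-- For any algebraic integer λ in the ring of integers of
`K = ℚ(ζ₇ + ζ₇⁻¹)` (realized as the subfield of `ℝ` generated by
`2 cos (2π/7) = ζ₇ + ζ₇⁻¹`), the field norm `N_{K/ℚ}(λ)` is congruent to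
`0`, `1` or `-1` modulo `7`. -/
theorem norm_mod_seven
    (K : IntermediateField ℚ ℝ)
    (hK : K = IntermediateField.adjoin ℚ {(2 * Real.cos (2 * π / 7) : ℝ)})
    (lam : NumberField.RingOfIntegers K) :
    Algebra.norm ℤ lam ≡ 0 [ZMOD 7] ∨ Algebra.norm ℤ lam ≡ 1 [ZMOD 7] ∨
      Algebra.norm ℤ lam ≡ -1 [ZMOD 7] := by
  subst hK
  obtain ⟨c, hc⟩ :=
    exists_intCast_norm_eq_cube_of_adjoin two_cos_two_pi_div_seven_cubic_eq_zero lam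
  have hmod (b : ℤ) (h : c ^ 3 = b) : Algebra.norm ℤ lam ≡ b [ZMOD 7] :=
    (ZMod.intCast_eq_intCast_iff _ _ 7).mp (hc.trans h)
  rcases cube_zmod_seven c with h | h | h
  · exact Or.inl (hmod 0 (by simp [h]))
  · exact Or.inr (Or.inl (hmod 1 (by simp [h])))
  · exact Or.inr (Or.inr (hmod (-1) (by simp [h])))
end

section
/- If λ = xφ₁ + yφ₂ + zφ₃ with x, y, z ∈ Z, where φ_m = ζ₇^m + ζ₇^{-m}, then N_{K/Q}(λ) = (x+y+z)³ - 7(x²z + y²x + z²y + xyz). -/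
/-!
`c = 2 cos (2π/7)` is a root of `X³ + X² - 2X - 1` (because `cos 4θ = cos 3θ` for `θ = 2π/7`),
and this cubic has no rational root, so it is the minimal polynomial of `c` and `1, c, c²` is a
`ℚ`-basis of `K`. In this basis `φ₂ = c² - 2` and `φ₃ = c³ - 3c = 1 - c - c²`, and the norm of
`λ` is the determinant of multiplication by `λ`.
-/

open Real Polynomial IntermediateField

theorem Algebra.leftMulMatrix_eq_of_mul_eq_sum {R S ι : Type*} [Fintype ι] [DecidableEq ι]
    [CommRing R] [Ring S] [Algebra R S] (b : Module.Basis ι R S) (s : S) (M : Matrix ι ι R)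
    (h : ∀ j, s * b j = ∑ i, M i j • b i) : Algebra.leftMulMatrix b s = M := by
  ext i j
  rw [Algebra.leftMulMatrix_eq_repr_mul, h j, b.repr_sum_self]

noncomputable def cubic7 : ℚ[X] := X ^ 3 + X ^ 2 - 2 * X - 1

theorem aeval_cubic7 {A : Type*} [CommRing A] [Algebra ℚ A] (c : A) :
    aeval c cubic7 = c ^ 3 + c ^ 2 - 2 * c - 1 := by
  simp [cubic7, map_ofNat]

theorem cubic7_natDegree : cubic7.natDegree = 3 := by
  unfold cubic7; compute_degree!

theorem cubic7_monic : cubic7.Monic := by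
  unfold cubic7; monicity!

theorem cubic7_not_isRoot (r : ℚ) : ¬ cubic7.IsRoot r := by
  intro hr
  have hroot : aeval r (X ^ 3 + X ^ 2 - 2 * X - 1 : ℤ[X]) = 0 := by
    simpa [cubic7, map_ofNat] using hr
  obtain ⟨n, rfl, hn⟩ := exists_integer_of_is_root_of_monic (by monicity!) hroot
  have hn : n ∣ 1 := by simpa using hn
  rcases Int.isUnit_iff.mp (isUnit_of_dvd_one hn) with rfl | rfl <;> norm_num [map_ofNat] at hroot

theorem cubic7_irreducible : Irreducible cubic7 := by
  rw [irreducible_iff_roots_eq_zero_of_degree_le_three (by rw [cubic7_natDegree]; norm_num)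
    (by rw [cubic7_natDegree]), Multiset.eq_zero_iff_forall_notMem]
  exact fun r hr ↦ cubic7_not_isRoot r (isRoot_of_mem_roots hr)

theorem minpoly_eq_cubic7 {E : Type*} [Field E] [Algebra ℚ E] {c : E}
    (hc : aeval c cubic7 = 0) : minpoly ℚ c = cubic7 :=
  (minpoly.eq_of_irreducible_of_monic cubic7_irreducible hc cubic7_monic).symm

theorem PowerBasis.norm_algebraMap_add_smul_gen_add_smul_gen_sq {L : Type*} [CommRing L]
    [Algebra ℚ L] (pb : PowerBasis ℚ L) (hpb : minpoly ℚ pb.gen = cubic7) (a b d : ℚ) :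
    Algebra.norm ℚ (algebraMap ℚ L a + b • pb.gen + d • pb.gen ^ 2) =
      a ^ 3 + b ^ 3 + d ^ 3 - a ^ 2 * b + 5 * a ^ 2 * d - 2 * a * b ^ 2 - a * b * d
        + 6 * a * d ^ 2 - b ^ 2 * d - 2 * b * d ^ 2 := by
  have hθ : pb.gen ^ 3 + pb.gen ^ 2 - 2 * pb.gen - 1 = 0 := by
    rw [← aeval_cubic7, ← hpb, minpoly.aeval]
  have hdim : pb.dim = 3 := by rw [← pb.natDegree_minpoly, hpb, cubic7_natDegree]
  let B := pb.basis.reindex (finCongr hdim)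
  have hB (j : Fin 3) : B j = pb.gen ^ (j : ℕ) := by simp [B]
  -- column `j` holds the coordinates of `s θʲ`, reduced with `θ³ = 1 + 2θ - θ²`
  rw [Algebra.norm_eq_matrix_det B, Algebra.leftMulMatrix_eq_of_mul_eq_sum B _
    !![a, d, b - d; b, a + 2 * d, 2 * b - d; d, b - d, a - b + 3 * d], Matrix.det_fin_three]
  · simp
    ring
  intro j
  simp only [Fin.sum_univ_three, hB, Algebra.smul_def]
  fin_cases j <;> simp [map_ofNat]
  · linear_combination algebraMap ℚ L d * hθ
  · linear_combination (algebraMap ℚ L d * pb.gen + (algebraMap ℚ L b - algebraMap ℚ L d)) * hθ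

theorem two_mul_cos_two_mul (θ : ℝ) : 2 * cos (2 * θ) = (2 * cos θ) ^ 2 - 2 := by
  rw [cos_two_mul]; ring

theorem two_mul_cos_three_mul (θ : ℝ) : 2 * cos (3 * θ) = (2 * cos θ) ^ 3 - 3 * (2 * cos θ) := by
  rw [cos_three_mul]; ring

theorem aeval_two_mul_cos_two_pi_div_seven : aeval (2 * cos (2 * π / 7)) cubic7 = 0 := by
  have h43 : 2 * cos (2 * (2 * (2 * π / 7))) = 2 * cos (3 * (2 * π / 7)) := by
    rw [show 2 * (2 * (2 * π / 7)) = 2 * π - 3 * (2 * π / 7) by ring, cos_two_pi_sub]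
  rw [two_mul_cos_two_mul, two_mul_cos_two_mul, two_mul_cos_three_mul] at h43
  have hne : 2 * cos (2 * π / 7) - 2 ≠ 0 := by
    have : cos (2 * π / 7) < 1 := by
      simpa using cos_lt_cos_of_nonneg_of_le_pi le_rfl (by linarith [pi_pos]) (by positivity)
    linarith
  -- with `u = 2 cos θ`, `h43` reads `(u - 2) (u³ + u² - 2u - 1) = 0`
  rw [aeval_cubic7]
  refine (mul_eq_zero.mp ?_).resolve_left hne
  linear_combination h43

/-- If `λ = xφ₁ + yφ₂ + zφ₃` with `x, y, z ∈ ℤ`, where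
`φ_m = ζ₇^m + ζ₇^{-m} = 2 cos (2πm/7)`, then
`N_{K/ℚ}(λ) = (x+y+z)³ - 7(x²z + y²x + z²y + xyz)`. -/
theorem norm_formula
    (K : IntermediateField ℚ ℝ)
    (hK : K = IntermediateField.adjoin ℚ {(2 * Real.cos (2 * π / 7) : ℝ)})
    (x y z : ℤ) (lam : K)
    (hlam : (lam : ℝ) = x * (2 * Real.cos (2 * π / 7)) +
      y * (2 * Real.cos (2 * 2 * π / 7)) + z * (2 * Real.cos (2 * 3 * π / 7))) :
    Algebra.norm ℚ lam =
      ((x + y + z : ℤ)^3 - 7 * (x^2 * z + y^2 * x + z^2 * y + x * y * z) : ℤ) := by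
  subst hK
  have hc := aeval_two_mul_cos_two_pi_div_seven
  have hint : IsIntegral ℚ (2 * cos (2 * π / 7)) := ⟨cubic7, cubic7_monic, by rwa [← aeval_def]⟩
  set pb := adjoin.powerBasis hint with hpb_def
  have hgen : (pb.gen : ℝ) = 2 * cos (2 * π / 7) := by
    rw [hpb_def, adjoin.powerBasis_gen, AdjoinSimple.coe_gen]
  have hpb : minpoly ℚ pb.gen = cubic7 := (minpoly_gen ℚ _).trans (minpoly_eq_cubic7 hc)
  have hlam_basis : lam = algebraMap ℚ _ (z - 2 * y) + (x - z : ℚ) • pb.gen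
      + (y - z : ℚ) • pb.gen ^ 2 := by
    apply Subtype.ext
    rw [aeval_cubic7] at hc
    rw [show 2 * 2 * π / 7 = 2 * (2 * π / 7) by ring, two_mul_cos_two_mul,
      show 2 * 3 * π / 7 = 3 * (2 * π / 7) by ring, two_mul_cos_three_mul] at hlam
    simp only [hlam, Rat.smul_def, eq_ratCast, IntermediateField.coe_add, IntermediateField.coe_mul,
      IntermediateField.coe_pow, SubfieldClass.coe_ratCast, hgen]
    push_cast
    linear_combination (z : ℝ) * hc
  rw [hlam_basis]
  -- not `rw`: the two `Algebra ℚ ℚ⟮c⟯` instances (`DivisionRing.toRatAlgebra` in the statement,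
  -- the intermediate field's own one in `pb`) agree only up to unfolding
  refine (pb.norm_algebraMap_add_smul_gen_add_smul_gen_sq hpb _ _ _).trans ?_
  push_cast
  ring
end

section
/- The element 2 is a prime element in the ring of integers of Q(ζ₇ + ζ₇⁻¹). -/
/-!
The number α = 2 cos(2π/7) = ζ₇ + ζ₇⁻¹ is a root of X³ + X² - 2X - 1, which stays irreducible
modulo 2, so K = ℚ(α) is cubic. Hence 𝓞_K/(2) has 2³ = 8 elements, and the image of α in it
generates a copy of the field 𝔽₂[X]/(X³ + X² + 1), which also has 8 elements. So 𝓞_K/(2) is a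
field and (2) is a prime ideal.
-/

open Real Polynomial NumberField IntermediateField

section InertPrime

variable {K : Type*} [Field K] [NumberField K]

theorem NumberField.RingOfIntegers.natCard_quotient_span_natCast (n : ℕ) :
    Nat.card (𝓞 K ⧸ Ideal.span {(n : 𝓞 K)}) = n ^ Module.finrank ℚ K := by
  rw [← Submodule.cardQuot_apply, ← Ideal.absNorm_apply, Ideal.absNorm_span_natCast,
    RingOfIntegers.rank]

theorem AdjoinRoot.natCard_eq_pow {F : Type*} [Field F] [Finite F] {f : F[X]} (hf : f ≠ 0) :
    Nat.card (AdjoinRoot f) = Nat.card F ^ f.natDegree := by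
  have := (AdjoinRoot.powerBasis hf).finite
  rw [Module.natCard_eq_pow_finrank (K := F), (AdjoinRoot.powerBasis hf).finrank,
    AdjoinRoot.powerBasis_dim]

theorem isField_of_ringHom_of_natCard_eq {F R : Type*} [Field F] [CommRing R] [Nontrivial R]
    [Finite R] (φ : F →+* R) (hcard : Nat.card R = Nat.card F) : IsField R :=
  have : Finite F := Finite.of_injective φ φ.injective
  have hbij : Function.Bijective φ :=
    (Nat.bijective_iff_injective_and_card φ).mpr ⟨φ.injective, hcard.symm⟩
  (RingEquiv.ofBijective φ hbij).symm.toMulEquiv.isField (Field.toIsField F)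

theorem prime_natCast_of_irreducible_map {p : ℕ} [hp : Fact p.Prime] {f : ℤ[X]} {a : K}
    (hf : f.Monic) (ha : aeval a f = 0) (hirr : Irreducible (f.map (Int.castRingHom (ZMod p))))
    (hdeg : f.natDegree = Module.finrank ℚ K) : Prime (p : 𝓞 K) := by
  set I := Ideal.span {(p : 𝓞 K)}
  have hcard : Nat.card (𝓞 K ⧸ I) = p ^ Module.finrank ℚ K :=
    RingOfIntegers.natCard_quotient_span_natCast p
  have hunit : (p : 𝓞 K) ∈ nonunits (𝓞 K) := fun h => by
    simp [I, Ideal.span_singleton_eq_top.mpr h] at hcard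
    exact (Nat.one_lt_pow Module.finrank_pos.ne' hp.out.one_lt).ne hcard
  have : Nontrivial (𝓞 K ⧸ I) :=
    Ideal.Quotient.nontrivial_iff.mpr (mt Ideal.span_singleton_eq_top.mp hunit)
  have : Finite (𝓞 K ⧸ I) := Nat.finite_of_card_ne_zero (by simp [hcard, hp.out.ne_zero])
  have : CharP (𝓞 K ⧸ I) p := CharP.quotient (𝓞 K) p hunit
  let a' : 𝓞 K := ⟨a, f, hf, ha⟩
  have ha' : aeval a' f = 0 := RingOfIntegers.coe_injective <| by
    rw [← aeval_algebraMap_apply, map_zero]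
    exact ha
  have : Fact (Irreducible (f.map (Int.castRingHom (ZMod p)))) := ⟨hirr⟩
  let ψ := ZMod.castHom (dvd_refl p) (𝓞 K ⧸ I)
  let φ := AdjoinRoot.lift (f := f.map (Int.castRingHom (ZMod p))) ψ (Ideal.Quotient.mk I a') <| by
    rw [eval₂_map, RingHom.ext_int (ψ.comp (Int.castRingHom (ZMod p)))
      ((Ideal.Quotient.mk I).comp (algebraMap ℤ (𝓞 K))), ← hom_eval₂, ← aeval_def, ha', map_zero]
  rw [← Ideal.span_singleton_prime (by exact_mod_cast hp.out.ne_zero)]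
  refine (Ideal.Quotient.maximal_of_isField I (isField_of_ringHom_of_natCard_eq φ ?_)).isPrime
  rw [hcard, AdjoinRoot.natCard_eq_pow (hf.map _).ne_zero, Nat.card_zmod, hf.natDegree_map, hdeg]

end InertPrime

noncomputable def cubicSeven : ℤ[X] := X ^ 3 + X ^ 2 - 2 * X - 1

theorem cubicSeven_monic : cubicSeven.Monic := by
  unfold cubicSeven; monicity!

theorem natDegree_cubicSeven : cubicSeven.natDegree = 3 := by
  unfold cubicSeven; compute_degree!

theorem irreducible_map_cubicSeven_zmod_two :
    Irreducible (cubicSeven.map (Int.castRingHom (ZMod 2))) := by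
  have hmonic := cubicSeven_monic.map (Int.castRingHom (ZMod 2))
  have hdeg : (cubicSeven.map (Int.castRingHom (ZMod 2))).natDegree = 3 := by
    rw [cubicSeven_monic.natDegree_map, natDegree_cubicSeven]
  rw [hmonic.irreducible_iff_roots_eq_zero_of_degree_le_three (by omega) (by omega),
    Multiset.eq_zero_iff_forall_notMem]
  intro x
  rw [mem_roots hmonic.ne_zero, IsRoot, eval_map]
  simp only [cubicSeven, eval₂_sub, eval₂_add, eval₂_mul, eval₂_X_pow, eval₂_X, eval₂_ofNat,
    eval₂_one]
  revert x
  decide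

theorem irreducible_map_cubicSeven_rat : Irreducible (cubicSeven.map (Int.castRingHom ℚ)) :=
  (IsPrimitive.Int.irreducible_iff_irreducible_map_cast cubicSeven_monic.isPrimitive).mp <|
    cubicSeven_monic.irreducible_of_irreducible_map _ _ irreducible_map_cubicSeven_zmod_two

theorem aeval_two_cos_two_pi_div_seven : aeval (2 * cos (2 * π / 7)) cubicSeven = 0 := by
  set c := cos (2 * π / 7)
  have hc : c < 1 := by
    rw [← cos_zero]
    exact cos_lt_cos_of_nonneg_of_le_pi le_rfl (by linarith [pi_pos]) (by positivity)
  have h43 : cos (4 * (2 * π / 7)) = cos (3 * (2 * π / 7)) := by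
    rw [show 4 * (2 * π / 7) = 2 * π - 3 * (2 * π / 7) by ring, cos_two_pi_sub]
  rw [show 4 * (2 * π / 7) = 2 * (2 * (2 * π / 7)) by ring, cos_two_mul, cos_two_mul,
    cos_three_mul] at h43
  have : (c - 1) * (8 * c ^ 3 + 4 * c ^ 2 - 4 * c - 1) = 0 := by linear_combination h43
  have hcubic := (mul_eq_zero.mp this).resolve_left (sub_ne_zero.mpr hc.ne)
  simp only [cubicSeven, map_sub, map_add, map_pow, map_mul, aeval_X, map_ofNat, map_one]
  linear_combination hcubic

theorem finrank_adjoin_two_cos_two_pi_div_seven :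
    Module.finrank ℚ ℚ⟮2 * cos (2 * π / 7)⟯ = 3 := by
  have hroot : aeval (2 * cos (2 * π / 7)) (cubicSeven.map (Int.castRingHom ℚ)) = 0 := by
    rw [← algebraMap_int_eq, aeval_map_algebraMap, aeval_two_cos_two_pi_div_seven]
  have hminpoly := minpoly.eq_of_irreducible_of_monic irreducible_map_cubicSeven_rat hroot
    (cubicSeven_monic.map _)
  rw [adjoin.finrank ⟨_, cubicSeven_monic.map _, hroot⟩, ← hminpoly,
    cubicSeven_monic.natDegree_map, natDegree_cubicSeven]

/-- `2` is a prime element of the ring of integers of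
`K = ℚ(ζ₇ + ζ₇⁻¹)`. -/
theorem two_is_prime
    (K : IntermediateField ℚ ℝ)
    (hK : K = IntermediateField.adjoin ℚ {(2 * Real.cos (2 * π / 7) : ℝ)}) :
    Prime (2 : NumberField.RingOfIntegers K) := by
  subst hK
  set α := 2 * cos (2 * π / 7)
  have : FiniteDimensional ℚ ℚ⟮α⟯ :=
    Module.finite_of_finrank_eq_succ finrank_adjoin_two_cos_two_pi_div_seven
  have : NumberField ℚ⟮α⟯ := ⟨⟩
  have hroot : aeval (AdjoinSimple.gen ℚ α) cubicSeven = 0 :=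
    (algebraMap ℚ⟮α⟯ ℝ).injective <| by
      rw [← aeval_algebraMap_apply, AdjoinSimple.algebraMap_gen,
        aeval_two_cos_two_pi_div_seven, map_zero]
  exact_mod_cast prime_natCast_of_irreducible_map (p := 2) cubicSeven_monic hroot
    irreducible_map_cubicSeven_zmod_two
    (by rw [natDegree_cubicSeven, finrank_adjoin_two_cos_two_pi_div_seven])
end

section
/- Let F be a finite field of even characteristic (cardinality even), and let A, B, μ, ν ∈ F with 4AB - Bμ² - ν² ≠ 0. Then there exist x, z ∈ F such that x² + μx + A + νz + Bz² = 0. -/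
/-!
In characteristic 2 every element of a finite field is a square, say `B = s²`, and then
`x² + B z² = (x + s z)²` vanishes on the line `x = s z`. Along that line the equation becomes
linear, `(ν + s μ) z + A = 0`, and its slope is nonzero because
`(ν + s μ)² = ν² + B μ² = 4AB - Bμ² - ν²`.
-/

section CharTwo

variable {R : Type*} [CommRing R] [CharP R 2]

theorem discr_eq_sq_of_eq_sq {A B μ ν s : R} (hs : B = s ^ 2) :
    4 * A * B - B * μ ^ 2 - ν ^ 2 = (ν + s * μ) ^ 2 := by
  linear_combination (2 * A * B - B * μ ^ 2 - ν ^ 2 - s * μ * ν) * CharTwo.two_eq_zero (R := R)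
    + μ ^ 2 * hs

theorem exists_quadric_zero_of_eq_sq {F : Type*} [Field F] [CharP F 2] {A B μ ν s : F}
    (hs : B = s ^ 2) (hslope : ν + s * μ ≠ 0) :
    ∃ x z : F, x ^ 2 + μ * x + A + ν * z + B * z ^ 2 = 0 := by
  set t := A / (ν + s * μ)
  have ht : (ν + s * μ) * t = A := mul_div_cancel₀ A hslope
  refine ⟨s * t, t, ?_⟩
  linear_combination -t ^ 2 * hs + ht + (B * t ^ 2 + A) * CharTwo.two_eq_zero (R := F)

end CharTwo

/-- In a finite field `F` of even cardinality, if
`4AB - Bμ² - ν² ≠ 0` then the equation `x² + μx + A + νz + Bz² = 0`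
has a solution. -/
theorem solvable_even_char
    (F : Type*) [Field F] [Fintype F] (heven : Even (Fintype.card F))
    (A B μ ν : F) (hT : 4 * A * B - B * μ ^ 2 - ν ^ 2 ≠ 0) :
    ∃ x z : F, x ^ 2 + μ * x + A + ν * z + B * z ^ 2 = 0 := by
  have : CharP F 2 :=
    ringChar.of_eq (FiniteField.even_card_iff_char_two.mpr (Nat.even_iff.mp heven))
  obtain ⟨s, hs⟩ := isSquare_of_charTwo' B
  rw [← sq] at hs
  refine exists_quadric_zero_of_eq_sq hs fun hslope => hT ?_
  rw [discr_eq_sq_of_eq_sq hs, hslope, zero_pow two_ne_zero]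
end

section
/- Let F be a finite field with q elements and let M be a nonzero 2×2 matrix over F with det M = 0. Then the set {DM : D ∈ M₂(F)} has exactly q² elements. -/
/-!
The rows of `D * M` are exactly the linear combinations of the rows of `M`, so `{D * M}` is the
set of matrices whose rows all lie in the row space of `M`. That space has `q ^ rank M` elements,
and a nonzero singular `2 × 2` matrix has rank one, giving `(q ^ 1) ^ 2`.
-/

open Submodule

namespace Matrix

variable {F : Type*} [Field F] {l m n : Type*}

theorem row_mul_eq_sum [Fintype m] (D : Matrix l m F) (M : Matrix m n F) (i : l) :
    (D * M).row i = ∑ k, D i k • M.row k :=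
  vecMul_eq_sum (D i) M

theorem exists_mul_eq_iff_forall_row_mem_span_row [Fintype m] {M : Matrix m n F}
    {N : Matrix l n F} :
    (∃ D : Matrix l m F, N = D * M) ↔ ∀ i, N.row i ∈ span F (Set.range M.row) := by
  simp_rw [mem_span_range_iff_exists_fun]
  constructor
  · rintro ⟨D, rfl⟩ i
    exact ⟨D i, (row_mul_eq_sum D M i).symm⟩
  · intro h
    choose D hD using h
    exact ⟨of D, funext fun i => (hD i).symm.trans (row_mul_eq_sum (of D) M i).symm⟩

theorem ncard_setOf_exists_mul_eq [Finite l] [Fintype m] [Fintype n] (M : Matrix m n F) :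
    {N : Matrix l n F | ∃ D : Matrix l m F, N = D * M}.ncard =
      (Nat.card F ^ M.rank) ^ Nat.card l := by
  let V := span F (Set.range M.row)
  calc {N : Matrix l n F | ∃ D : Matrix l m F, N = D * M}.ncard
      = Nat.card {N : Matrix l n F // ∀ i, N.row i ∈ V} := by
        simp only [exists_mul_eq_iff_forall_row_mem_span_row, ← Nat.card_coe_set_eq]; rfl
    _ = Nat.card (l → V) := Nat.card_congr (Equiv.subtypePiEquivPi (p := fun _ v => v ∈ V))
    _ = (Nat.card F ^ M.rank) ^ Nat.card l := by
        rw [Nat.card_fun, Module.natCard_eq_pow_finrank (K := F), rank_eq_finrank_span_row]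

theorem rank_lt_card_of_det_eq_zero [Fintype n] [DecidableEq n] {M : Matrix n n F}
    (hM : M.det = 0) : M.rank < Fintype.card n := by
  have : ¬ LinearIndependent F M.row := by
    rw [linearIndependent_rows_iff_isUnit, isUnit_iff_isUnit_det, hM]
    exact not_isUnit_zero
  rw [linearIndependent_iff_card_le_finrank_span, not_le] at this
  rwa [rank_eq_finrank_span_row]

theorem rank_pos_of_ne_zero [Fintype m] [Fintype n] {M : Matrix m n F} (hM : M ≠ 0) :
    0 < M.rank := by
  rw [rank_eq_finrank_span_row, Nat.pos_iff_ne_zero, Ne, Submodule.finrank_eq_zero,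
    span_eq_bot]
  intro h
  exact hM (funext fun i => h _ ⟨i, rfl⟩)

theorem rank_eq_one_of_ne_zero_of_det_eq_zero {M : Matrix (Fin 2) (Fin 2) F} (hM : M ≠ 0)
    (hdet : M.det = 0) : M.rank = 1 := by
  have hlt : M.rank < 2 := by simpa using rank_lt_card_of_det_eq_zero hdet
  have hpos : 0 < M.rank := rank_pos_of_ne_zero hM
  omega

end Matrix

/-- If `M` is a nonzero `2×2` matrix over a finite field `F` with
`q` elements and `det M = 0`, then the set `{DM : D ∈ M₂(F)}` has exactly `q²`
elements. -/
theorem card_left_orbit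
    (F : Type*) [Field F] [Fintype F] (q : ℕ) (hq : q = Fintype.card F)
    (M : Matrix (Fin 2) (Fin 2) F) (hM : M ≠ 0) (hdet : M.det = 0) :
    Set.ncard {N : Matrix (Fin 2) (Fin 2) F |
      ∃ D : Matrix (Fin 2) (Fin 2) F, N = D * M} = q ^ 2 := by
  rw [Matrix.ncard_setOf_exists_mul_eq, Matrix.rank_eq_one_of_ne_zero_of_det_eq_zero hM hdet,
    pow_one, Nat.card_eq_fintype_card, Nat.card_fin, hq]
end

section
/- Let F be a finite field with q elements. The set of nonzero 2×2 matrices over F with determinant zero is partitioned by the equivalence 'M ~ M′ iff M′ = DM for some invertible D' into exactly q + 1 classes, each class together with 0 forming a set {DM : D ∈ M₂(F)} of cardinality q². -/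
/-! The left multiples `D * M` of a matrix `M` are exactly the matrices whose rows lie in the row
space of `M`. For `M` nonzero and singular this row space is a line in `F²`, so the sets in
question are indexed by the `q + 1` points of the projective line over `F`. Distinct lines meet
only in `0`, and a matrix with both rows on a given line is a pair of its `q` vectors. -/

open Module Submodule
open scoped LinearAlgebra.Projectivization

section rowMatrices

variable {R : Type*} [Semiring R] {m n : Type*}

def Submodule.rowMatrices (L : Submodule R (n → R)) (m : Type*) : Set (Matrix m n R) :=
  {N | ∀ i, N i ∈ L}

theorem Matrix.setOf_eq_mul_eq_rowMatrices [Fintype m] (M : Matrix m n R) (l : Type*) :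
    {N : Matrix l n R | ∃ D : Matrix l m R, N = D * M} =
      (span R (Set.range M.row)).rowMatrices l := by
  ext N
  change (∃ D : Matrix l m R, N = D * M) ↔ ∀ i, N i ∈ span R (Set.range M.row)
  simp only [mem_span_range_iff_exists_fun]
  constructor
  · rintro ⟨D, rfl⟩ i
    exact ⟨D i, by rw [Matrix.mul_apply_eq_vecMul, Matrix.vecMul_eq_sum]; rfl⟩
  · intro h
    choose D hD using h
    refine ⟨Matrix.of D, funext fun i => ?_⟩
    rw [Matrix.mul_apply_eq_vecMul, Matrix.vecMul_eq_sum]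
    exact (hD i).symm

theorem Submodule.rowMatrices_injective [Nonempty m] :
    Function.Injective fun L : Submodule R (n → R) => L.rowMatrices m := by
  intro L L' h
  ext v
  have hv : (∀ _ : m, v ∈ L) ↔ (∀ _ : m, v ∈ L') := Set.ext_iff.1 h fun _ => v
  simpa only [forall_const] using hv

theorem Submodule.rowMatrices_inf (L L' : Submodule R (n → R)) :
    (L ⊓ L').rowMatrices m = L.rowMatrices m ∩ L'.rowMatrices m := by
  ext N
  simp [rowMatrices, forall_and]

theorem Submodule.rowMatrices_bot : (⊥ : Submodule R (n → R)).rowMatrices m = {0} := by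
  ext N
  simp only [rowMatrices, mem_bot, Set.mem_singleton_iff]
  exact ⟨funext, fun h i => congrFun h i⟩

theorem Submodule.ncard_rowMatrices [Fintype m] (L : Submodule R (n → R)) :
    (L.rowMatrices m).ncard = Nat.card L ^ Fintype.card m := by
  rw [← Nat.card_coe_set_eq, ← Nat.card_eq_fintype_card, ← Nat.card_fun]
  exact Nat.card_congr Equiv.subtypePiEquivPi

end rowMatrices

section Field

variable {K : Type*} [Field K] {n : Type*}

theorem Matrix.finrank_span_rows_eq_zero_iff {m : Type*} [Finite n] (M : Matrix m n K) :
    finrank K (span K (Set.range M.row)) = 0 ↔ M = 0 := by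
  rw [Submodule.finrank_eq_zero, span_eq_bot, Set.forall_mem_range]
  exact ⟨fun h => funext h, fun h i => congrFun h i⟩

theorem Matrix.finrank_span_rows_eq_card_iff [Fintype n] [DecidableEq n] (M : Matrix n n K) :
    finrank K (span K (Set.range M.row)) = Fintype.card n ↔ M.det ≠ 0 := by
  rw [eq_comm, ← Set.finrank, ← linearIndependent_iff_card_eq_finrank_span,
    ← isUnit_iff_ne_zero, ← Matrix.isUnit_iff_isUnit_det]
  exact Matrix.linearIndependent_rows_iff_isUnit

theorem Matrix.finrank_span_rows_eq_one_iff (M : Matrix (Fin 2) (Fin 2) K) :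
    finrank K (span K (Set.range M.row)) = 1 ↔ M ≠ 0 ∧ M.det = 0 := by
  have h_le := (span K (Set.range M.row)).finrank_le
  rw [finrank_fin_fun] at h_le
  have h_zero := M.finrank_span_rows_eq_zero_iff
  have h_two := M.finrank_span_rows_eq_card_iff
  rw [Fintype.card_fin] at h_two
  constructor
  · intro h
    exact ⟨fun h0 => by simp_all, by_contra fun hd => by simp_all⟩
  · rintro ⟨h0, hd⟩
    have := mt h_zero.1 h0
    have := mt h_two.1 (not_not.2 hd)
    omega

theorem Submodule.inf_eq_bot_of_finrank_eq_one {V : Type*} [AddCommGroup V] [Module K V]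
    {L L' : Submodule K V} (hL : finrank K L = 1) (hL' : finrank K L' = 1) (h : L ≠ L') :
    L ⊓ L' = ⊥ := by
  have : FiniteDimensional K L := Module.finite_of_finrank_eq_succ hL
  have : FiniteDimensional K L' := Module.finite_of_finrank_eq_succ hL'
  rw [← Submodule.finrank_eq_zero]
  have h_le := Submodule.finrank_mono (inf_le_left : L ⊓ L' ≤ L)
  by_contra h_ne
  have h_left := Submodule.eq_of_le_of_finrank_eq (inf_le_left : L ⊓ L' ≤ L) (by omega)
  have h_right := Submodule.eq_of_le_of_finrank_eq (inf_le_right : L ⊓ L' ≤ L') (by omega)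
  exact h (h_left.symm.trans h_right)

theorem Matrix.setOf_rowMatrices_span_rows_eq_range :
    {S | ∃ M : Matrix (Fin 2) (Fin 2) K, M ≠ 0 ∧ M.det = 0 ∧
        S = (span K (Set.range M.row)).rowMatrices (Fin 2)} =
      Set.range fun p : ℙ K (Fin 2 → K) => p.submodule.rowMatrices (Fin 2) := by
  ext S
  constructor
  · rintro ⟨M, hM, hdet, rfl⟩
    refine ⟨Projectivization.mk'' _ (M.finrank_span_rows_eq_one_iff.2 ⟨hM, hdet⟩), ?_⟩
    dsimp only
    rw [Projectivization.submodule_mk'']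
  · rintro ⟨p, rfl⟩
    let M : Matrix (Fin 2) (Fin 2) K := Matrix.of fun _ => p.rep
    have h_span : span K (Set.range M.row) = p.submodule := by
      rw [p.submodule_eq, ← Set.range_const (ι := Fin 2)]
      rfl
    obtain ⟨hM, hdet⟩ := M.finrank_span_rows_eq_one_iff.1 (h_span ▸ p.finrank_submodule)
    exact ⟨M, hM, hdet, by rw [h_span]⟩

end Field

/-- Over a finite field `F` with `q` elements, there are exactly
`q + 1` distinct sets of the form `{DM : D ∈ M₂(F)}` as `M` ranges over nonzero
matrices of determinant zero; any two distinct such sets intersect only in `0`,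
and each has `q²` elements. -/
theorem orbit_partition
    (F : Type*) [Field F] [Fintype F] (q : ℕ) (hq : q = Fintype.card F) :
    Set.ncard {S : Set (Matrix (Fin 2) (Fin 2) F) |
        ∃ M : Matrix (Fin 2) (Fin 2) F, M ≠ 0 ∧ M.det = 0 ∧
          S = {N | ∃ D : Matrix (Fin 2) (Fin 2) F, N = D * M}} = q + 1 ∧
    (∀ M M' : Matrix (Fin 2) (Fin 2) F,
        M ≠ 0 → M.det = 0 → M' ≠ 0 → M'.det = 0 →
        {N | ∃ D : Matrix (Fin 2) (Fin 2) F, N = D * M} =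
          {N | ∃ D : Matrix (Fin 2) (Fin 2) F, N = D * M'} ∨
        {N | ∃ D : Matrix (Fin 2) (Fin 2) F, N = D * M} ∩
          {N | ∃ D : Matrix (Fin 2) (Fin 2) F, N = D * M'} = {0}) ∧
    (∀ M : Matrix (Fin 2) (Fin 2) F, M ≠ 0 → M.det = 0 →
        Set.ncard {N | ∃ D : Matrix (Fin 2) (Fin 2) F, N = D * M} = q ^ 2) := by
  simp only [Matrix.setOf_eq_mul_eq_rowMatrices]
  refine ⟨?_, ?_, ?_⟩
  · have h_inj : Function.Injective fun p : ℙ F (Fin 2 → F) => p.submodule.rowMatrices (Fin 2) :=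
      rowMatrices_injective.comp Projectivization.submodule_injective
    rw [Matrix.setOf_rowMatrices_span_rows_eq_range, Set.ncard_range_of_injective h_inj,
      Projectivization.card_of_finrank_two F _ (finrank_fin_fun F), hq, Nat.card_eq_fintype_card]
  · intro M M' hM hdet hM' hdet'
    by_cases h_eq : span F (Set.range M.row) = span F (Set.range M'.row)
    · exact Or.inl (by rw [h_eq])
    · right
      rw [← rowMatrices_inf, inf_eq_bot_of_finrank_eq_one (M.finrank_span_rows_eq_one_iff.2 ⟨hM, hdet⟩)
        (M'.finrank_span_rows_eq_one_iff.2 ⟨hM', hdet'⟩) h_eq, rowMatrices_bot]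
  · intro M hM hdet
    rw [ncard_rowMatrices, natCard_eq_pow_finrank (K := F), M.finrank_span_rows_eq_one_iff.2 ⟨hM, hdet⟩,
      Fintype.card_fin, hq, Nat.card_eq_fintype_card, pow_one]
end

section
/- For real quaternions, if α = (μ + i√S)/2 and β = (νi + j√T)/√S where S = 4A - μ² > 0 and T = BS - ν² > 0 (A, B, μ, ν real), then for all real x, y, z, w, the norm of x + yα + zβ + wαβ equals (x² + μxy + Ay²) + ν(yz - xw) + B(z² + μzw + Aw²). -/
open Quaternion

/-!
Write `α = a + b i` and `β = c i + d j`. Splitting `ℍ = ℂ ⊕ ℂ j` orthogonally, with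
`p = x + y α` and `q = z + w α` in `ℂ`, the quaternion is `(p + c q i) + d q j`, so its norm is
`N p + N β N q + 2 c Im (p q̄)`, and `Im (p q̄) = b (y z - x w)`. For the given `α` and `β`,
`2 a = μ`, `N α = A`, `2 b c = ν` and `N β = (ν² + T) / S = B`.
-/

theorem Quaternion.normSq_add_mul_add_mul_add_mul_mul {R : Type*} [CommRing R] {α β : ℍ[R]}
    (hαJ : α.imJ = 0) (hαK : α.imK = 0) (hβre : β.re = 0) (hβK : β.imK = 0) (x y z w : R) :
    normSq ((x : ℍ[R]) + (y : ℍ[R]) * α + (z : ℍ[R]) * β + (w : ℍ[R]) * (α * β)) =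
      (x ^ 2 + 2 * α.re * x * y + normSq α * y ^ 2) + 2 * α.imI * β.imI * (y * z - x * w) +
        normSq β * (z ^ 2 + 2 * α.re * z * w + normSq α * w ^ 2) := by
  simp only [normSq_def', re_add, imI_add, imJ_add, imK_add, re_mul, imI_mul, imJ_mul,
    imK_mul, re_coe, imI_coe, imJ_coe, imK_coe, hαJ, hαK, hβre, hβK]
  ring

/-- For real quaternions, with `α = (μ + i√S)/2` and
`β = (νi + j√T)/√S`, where `S = 4A - μ² > 0`, `T = BS - ν² > 0`, the norm of
`x + yα + zβ + wαβ` equals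
`(x² + μxy + Ay²) + ν(yz - xw) + B(z² + μzw + Aw²)`. -/
theorem quaternion_norm_formula
    (A B μ ν : ℝ) (S T : ℝ) (hS : S = 4 * A - μ ^ 2) (hT : T = B * S - ν ^ 2)
    (hSpos : 0 < S) (hTpos : 0 < T)
    (α β : ℍ[ℝ])
    (hα : α = ⟨μ / 2, Real.sqrt S / 2, 0, 0⟩)
    (hβ : β = ⟨0, ν / Real.sqrt S, Real.sqrt T / Real.sqrt S, 0⟩)
    (x y z w : ℝ) :
    Quaternion.normSq ((x : ℍ[ℝ]) + (y : ℍ[ℝ]) * α + (z : ℍ[ℝ]) * β +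
        (w : ℍ[ℝ]) * (α * β)) =
      (x ^ 2 + μ * x * y + A * y ^ 2) + ν * (y * z - x * w) +
        B * (z ^ 2 + μ * z * w + A * w ^ 2) := by
  have hsqS := Real.sq_sqrt hSpos.le
  have hsqT := Real.sq_sqrt hTpos.le
  have hS0 : Real.sqrt S ≠ 0 := (Real.sqrt_pos.mpr hSpos).ne'
  have hre : 2 * α.re = μ := by rw [hα]; ring
  have hν : 2 * α.imI * β.imI = ν := by rw [hα, hβ]; field_simp
  have hNα : normSq α = A := by
    rw [normSq_def', hα]
    linear_combination hsqS / 4 + hS / 4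
  have hNβ : normSq β = B := by
    rw [normSq_def', hβ, div_pow, div_pow, hsqS, hsqT]
    field_simp
    linear_combination hT
  rw [normSq_add_mul_add_mul_add_mul_mul (by rw [hα]) (by rw [hα]) (by rw [hβ]) (by rw [hβ]),
    hNα, hNβ, ← hre, ← hν]
end

section
/- Let A, B, μ, ν be real numbers with S = 4A - μ² > 0 and T = BS - ν² > 0. Then the quadratic form Q(x,y,z,w) = (x² + μxy + Ay²) + ν(yz - xw) + B(z² + μzw + Aw²) is positive definite; equivalently, the linear substitution X = x + (μ/2)y - (ν/2)w, Y = (√S/2)y + (ν/√S)z + (μν/(2√S))w, Z = √(T/S) z + (μ/2)√(T/S) w, W = (√T/2) w transforms Q into X² + Y² + Z² + W². -/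
/-- With `S = 4A - μ² > 0` and `T = BS - ν² > 0`, the quadratic
form `Q(x,y,z,w) = (x² + μxy + Ay²) + ν(yz - xw) + B(z² + μzw + Aw²)` is
positive definite; moreover the stated linear substitution transforms it into
`X² + Y² + Z² + W²`. -/
theorem Q_positive_definite_and_diagonalized
    (A B μ ν : ℝ) (S T : ℝ) (hS : S = 4 * A - μ ^ 2) (hT : T = B * S - ν ^ 2)
    (hSpos : 0 < S) (hTpos : 0 < T) :
    (∀ x y z w : ℝ, ¬ (x = 0 ∧ y = 0 ∧ z = 0 ∧ w = 0) →
      0 < (x ^ 2 + μ * x * y + A * y ^ 2) + ν * (y * z - x * w) +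
        B * (z ^ 2 + μ * z * w + A * w ^ 2)) ∧
    (∀ x y z w : ℝ,
      (x + (μ / 2) * y - (ν / 2) * w) ^ 2 +
      ((Real.sqrt S / 2) * y + (ν / Real.sqrt S) * z +
        (μ * ν / (2 * Real.sqrt S)) * w) ^ 2 +
      (Real.sqrt (T / S) * z + (μ / 2) * Real.sqrt (T / S) * w) ^ 2 +
      ((Real.sqrt T / 2) * w) ^ 2 =
        (x ^ 2 + μ * x * y + A * y ^ 2) + ν * (y * z - x * w) +
          B * (z ^ 2 + μ * z * w + A * w ^ 2)) := by
  have hsS : Real.sqrt S ^ 2 = S := Real.sq_sqrt hSpos.le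
  have hsT : Real.sqrt T ^ 2 = T := Real.sq_sqrt hTpos.le
  have hSne : S ≠ 0 := ne_of_gt hSpos
  have hsSne : Real.sqrt S ≠ 0 := by positivity
  have hsTne : Real.sqrt T ≠ 0 := by positivity
  have hsTSne : Real.sqrt (T / S) ≠ 0 := by
    have : 0 < T / S := div_pos hTpos hSpos
    positivity
  have key : ∀ x y z w : ℝ,
      (x + (μ / 2) * y - (ν / 2) * w) ^ 2 +
      ((Real.sqrt S / 2) * y + (ν / Real.sqrt S) * z +
        (μ * ν / (2 * Real.sqrt S)) * w) ^ 2 +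
      (Real.sqrt (T / S) * z + (μ / 2) * Real.sqrt (T / S) * w) ^ 2 +
      ((Real.sqrt T / 2) * w) ^ 2 =
        (x ^ 2 + μ * x * y + A * y ^ 2) + ν * (y * z - x * w) +
          B * (z ^ 2 + μ * z * w + A * w ^ 2) := by
    intro x y z w
    rw [Real.sqrt_div hTpos.le]
    obtain ⟨s, hs1⟩ : ∃ s, Real.sqrt S = s := ⟨_, rfl⟩
    obtain ⟨t, ht1⟩ : ∃ t, Real.sqrt T = t := ⟨_, rfl⟩
    rw [hs1, ht1]
    have hs2 : S = s ^ 2 := by rw [← hs1]; exact hsS.symm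
    have ht2 : T = t ^ 2 := by rw [← ht1]; exact hsT.symm
    have hsne : s ≠ 0 := hs1 ▸ hsSne
    have hA : A = (s ^ 2 + μ ^ 2) / 4 := by rw [← hs2, hS]; ring
    have hB : B = (t ^ 2 + ν ^ 2) / s ^ 2 := by
      rw [eq_div_iff (pow_ne_zero 2 hsne), ← hs2, ← ht2, hT]; ring
    rw [hA, hB]
    field_simp
    ring
  refine ⟨?_, key⟩
  intro x y z w h
  rw [← key x y z w]
  set a := x + (μ / 2) * y - (ν / 2) * w with ha
  set b := (Real.sqrt S / 2) * y + (ν / Real.sqrt S) * z +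
      (μ * ν / (2 * Real.sqrt S)) * w with hb
  set c := Real.sqrt (T / S) * z + (μ / 2) * Real.sqrt (T / S) * w with hc
  set d := (Real.sqrt T / 2) * w with hd
  have hnn : (0:ℝ) ≤ a ^ 2 + b ^ 2 + c ^ 2 + d ^ 2 := by positivity
  rcases hnn.lt_or_eq with hlt | heq
  · exact hlt
  · exfalso
    apply h
    have ha2 := sq_nonneg a
    have hb2 := sq_nonneg b
    have hc2 := sq_nonneg c
    have hd2 := sq_nonneg d
    have hA0 : a = 0 := by
      have : a ^ 2 = 0 := by linarith
      exact pow_eq_zero_iff (n := 2) (by norm_num) |>.mp this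
    have hB0 : b = 0 := by
      have : b ^ 2 = 0 := by linarith
      exact pow_eq_zero_iff (n := 2) (by norm_num) |>.mp this
    have hC0 : c = 0 := by
      have : c ^ 2 = 0 := by linarith
      exact pow_eq_zero_iff (n := 2) (by norm_num) |>.mp this
    have hD0 : d = 0 := by
      have : d ^ 2 = 0 := by linarith
      exact pow_eq_zero_iff (n := 2) (by norm_num) |>.mp this
    have hw : w = 0 := by
      rcases mul_eq_zero.1 (hd ▸ hD0) with h' | h'
      · exact absurd h' (by positivity)
      · exact h'
    have hz : z = 0 := by
      rw [hc, hw] at hC0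
      simp at hC0
      rcases hC0 with h' | h'
      · exact absurd h' hsTSne
      · exact h'
    have hy : y = 0 := by
      rw [hb, hw, hz] at hB0
      simp at hB0
      rcases hB0 with h' | h'
      · exact absurd h' hsSne
      · exact h'
    have hx : x = 0 := by
      rw [ha, hw, hy] at hA0
      simpa using hA0
    exact ⟨hx, hy, hz, hw⟩
end

section
/- The volume of the spherical diamond S_n(r) = {(x₁,...,x_{4n}) ∈ ℝ^{4n} : Σ_{t=0}^{n-1} √(x_{4t+1}² + x_{4t+2}² + x_{4t+3}² + x_{4t+4}²) < r} equals π^{2n} · 12^n · r^{4n} / (4n)!. -/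
/-!
Cutting `x ∈ ℝ^{4n}` into its `n` blocks is a measure preserving map to `(ℝ⁴)ⁿ`, under which
`S_n(r)` becomes the ball of radius `r` for the norm `g y = ∑ₜ ‖yₜ‖`. For any norm `g` on an
`N`-dimensional space, `vol {g < 1} = ∫ e^{-g} / N!`; here `e^{-g}` factors over the blocks, so
`∫ e^{-g} = (∫_{ℝ⁴} e^{-‖y‖})ⁿ = (4! · vol B⁴)ⁿ = (12 π²)ⁿ`, and scaling by `r` gives `r^{4n}`.
-/

open MeasureTheory Real Set Module Pointwise

theorem MeasureTheory.measurePreserving_curry (ι κ X : Type*) [Fintype ι] [Fintype κ]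
    [MeasurableSpace X] (μ : Measure X) [SigmaFinite μ] :
    MeasurePreserving (MeasurableEquiv.curry ι κ X) (Measure.pi fun _ => μ)
      (Measure.pi fun _ => Measure.pi fun _ => μ) := by
  refine ⟨(MeasurableEquiv.curry ι κ X).measurable, ?_⟩
  refine (Measure.pi_eq_generateFrom (fun _ => generateFrom_pi) (fun _ => isPiSystem_pi)
    (fun _ => Measure.FiniteSpanningSetsIn.pi fun _ => μ.toFiniteSpanningSetsIn)
    fun s hs => ?_).symm
  choose t ht hts using hs
  simp only [mem_univ_pi, mem_ofPred_eq] at ht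
  have hpre : MeasurableEquiv.curry ι κ X ⁻¹' univ.pi s = univ.pi fun p => t p.1 p.2 := by
    ext x
    simp [← hts]
  rw [Measure.map_apply (MeasurableEquiv.curry ι κ X).measurable
      (MeasurableSet.univ_pi fun i => hts i ▸ MeasurableSet.univ_pi (ht i)), hpre, Measure.pi_pi,
    Fintype.prod_prod_type]
  simp [← hts, Measure.pi_pi]

def blockEquiv (d n : ℕ) : (Fin (d * n) → ℝ) ≃ᵐ (Fin n → EuclideanSpace ℝ (Fin d)) :=
  (MeasurableEquiv.piCongrLeft (fun _ => ℝ)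
      (finProdFinEquiv.trans (finCongr (Nat.mul_comm n d)))).symm.trans <|
    (MeasurableEquiv.curry _ _ ℝ).trans <|
      MeasurableEquiv.piCongrRight fun _ => MeasurableEquiv.toLp 2 _

theorem blockEquiv_apply {d n : ℕ} (x : Fin (d * n) → ℝ) (t : Fin n) (i : Fin d)
    {k : Fin (d * n)} (hk : (k : ℕ) = d * t + i) : blockEquiv d n x t i = x k := by
  change x _ = x k
  congr 1
  ext
  simp [hk, Nat.add_comm]

theorem measurePreserving_blockEquiv (d n : ℕ) : MeasurePreserving (blockEquiv d n) :=
  ((volume_measurePreserving_piCongrLeft _ _).symm _).trans <|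
    (measurePreserving_curry _ _ ℝ volume).trans <|
      measurePreserving_pi _ _ fun _ => PiLp.volume_preserving_toLp _

theorem MeasureTheory.integral_exp_neg_sum_norm {ι E : Type*} [Fintype ι]
    [NormedAddCommGroup E] [MeasurableSpace E] (μ : Measure E) [SigmaFinite μ] :
    ∫ y : ι → E, exp (-∑ i, ‖y i‖) ∂Measure.pi (fun _ => μ) =
      (∫ x, exp (-‖x‖) ∂μ) ^ Fintype.card ι := by
  simp_rw [← Finset.sum_neg_distrib, exp_sum]
  exact integral_fintype_prod_eq_pow (fun x => exp (-‖x‖))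

section SumNorm

variable {ι E : Type*} [Fintype ι] [NormedAddCommGroup E] [NormedSpace ℝ E]
  [FiniteDimensional ℝ E] [MeasurableSpace E] [BorelSpace E] (μ : Measure E) [μ.IsAddHaarMeasure]

theorem MeasureTheory.measure_pi_sum_norm_lt_one :
    Measure.pi (fun _ : ι => μ) {y | ∑ i, ‖y i‖ < 1} =
      .ofReal ((∫ x, exp (-‖x‖) ∂μ) ^ Fintype.card ι /
        (Fintype.card ι * finrank ℝ E).factorial) := by
  have add_le (x y : ι → E) : ∑ i, ‖(x + y) i‖ ≤ ∑ i, ‖x i‖ + ∑ i, ‖y i‖ := by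
    rw [← Finset.sum_add_distrib]
    exact Finset.sum_le_sum fun i _ => norm_add_le (x i) (y i)
  have eq_zero {x : ι → E} (hx : ∑ i, ‖x i‖ = 0) : x = 0 :=
    funext fun i => norm_eq_zero.mp <|
      (Finset.sum_eq_zero_iff_of_nonneg fun i _ => norm_nonneg _).mp hx i (Finset.mem_univ i)
  have h := measure_lt_one_eq_integral_div_gamma (Measure.pi fun _ : ι => μ)
    (g := fun y => ∑ i, ‖y i‖) (by simp) (by simp) add_le eq_zero
    (fun c x => by simp [norm_smul, Finset.mul_sum]) one_pos
  simp only [rpow_one, div_one, finrank_pi_fintype, Finset.sum_const, Finset.card_univ,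
    smul_eq_mul] at h
  rw [h, integral_exp_neg_sum_norm, Gamma_nat_eq_factorial]

theorem MeasureTheory.measure_pi_sum_norm_lt {r : ℝ} (hr : 0 < r) :
    Measure.pi (fun _ : ι => μ) {y | ∑ i, ‖y i‖ < r} =
      .ofReal ((∫ x, exp (-‖x‖) ∂μ) ^ Fintype.card ι * r ^ (Fintype.card ι * finrank ℝ E) /
        (Fintype.card ι * finrank ℝ E).factorial) := by
  have hscale : {y : ι → E | ∑ i, ‖y i‖ < r} = r • {y : ι → E | ∑ i, ‖y i‖ < 1} := by
    ext y
    rw [mem_smul_set_iff_inv_smul_mem₀ hr.ne']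
    simp [norm_smul, ← Finset.mul_sum, abs_of_pos hr, inv_mul_lt_iff₀ hr]
  rw [hscale, Measure.addHaar_smul_of_nonneg _ hr.le, measure_pi_sum_norm_lt_one,
    ← ENNReal.ofReal_mul (by positivity), finrank_pi_fintype]
  congr 1
  simp only [Finset.sum_const, Finset.card_univ, smul_eq_mul]
  ring

end SumNorm

theorem InnerProductSpace.integral_exp_neg_norm_of_finrank_eq_two_mul {E : Type*}
    [NormedAddCommGroup E] [InnerProductSpace ℝ E] [FiniteDimensional ℝ E] [MeasurableSpace E]
    [BorelSpace E] [Nontrivial E] {k : ℕ} (hk : finrank ℝ E = 2 * k) :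
    ∫ x : E, exp (-‖x‖) = (2 * k).factorial * π ^ k / k.factorial := by
  have h := measure_unitBall_eq_integral_div_gamma (volume : Measure E) one_pos
  rw [InnerProductSpace.volume_ball_of_dim_even hk, hk] at h
  simp only [ENNReal.ofReal_one, one_pow, one_mul, rpow_one, div_one] at h
  rw [Gamma_nat_eq_factorial, ENNReal.ofReal_eq_ofReal_iff (by positivity)
    (div_nonneg (integral_nonneg fun x => (exp_pos _).le) (by positivity))] at h
  rw [mul_div_assoc, h, mul_div_cancel₀ _ (by positivity)]

/-- The volume of the spherical diamond
`S_n(r) = {x ∈ ℝ^{4n} : Σ_{t=0}^{n-1} √(x_{4t+1}² + ... + x_{4t+4}²) < r}`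
equals `π^{2n} · 12^n · r^{4n} / (4n)!`. -/
theorem volume_spherical_diamond
    (n : ℕ) (r : ℝ) (hr : 0 < r) :
    volume {x : Fin (4 * n) → ℝ |
        ∑ t : Fin n, Real.sqrt (∑ i : Fin 4,
          (x ⟨4 * t.val + i.val, by omega⟩) ^ 2) < r} =
      ENNReal.ofReal (π ^ (2 * n) * 12 ^ n * r ^ (4 * n) / (Nat.factorial (4 * n))) := by
  have hnorm (x : Fin (4 * n) → ℝ) (t : Fin n) :
      ‖blockEquiv 4 n x t‖ = √(∑ i : Fin 4, x ⟨4 * t + i, by omega⟩ ^ 2) := by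
    rw [EuclideanSpace.norm_eq]
    congr 1
    refine Finset.sum_congr rfl fun i _ => ?_
    rw [Real.norm_eq_abs, sq_abs, blockEquiv_apply x t i (k := ⟨4 * t + i, by omega⟩) rfl]
  have hset :
      {x : Fin (4 * n) → ℝ | ∑ t : Fin n, √(∑ i : Fin 4, x ⟨4 * t + i, by omega⟩ ^ 2) < r} =
        blockEquiv 4 n ⁻¹' {y | ∑ t, ‖y t‖ < r} := by
    ext x
    simp [hnorm]
  have hblock : ∫ y : EuclideanSpace ℝ (Fin 4), exp (-‖y‖) = 12 * π ^ 2 := by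
    rw [InnerProductSpace.integral_exp_neg_norm_of_finrank_eq_two_mul (k := 2) (by simp)]
    norm_num [Nat.factorial]
    ring
  rw [hset, (measurePreserving_blockEquiv 4 n).measure_preimage
      (measurableSet_lt (by fun_prop) measurable_const).nullMeasurableSet,
    volume_pi, measure_pi_sum_norm_lt volume hr, hblock, finrank_euclideanSpace_fin,
    Fintype.card_fin, mul_comm n 4]
  congr 1
  ring
end
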